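/- arXiv:1507.02519 — 2 statements merged into one kernel-verified Lean document; each statement's English description precedes it below -/
import Mathlib

section
/- The formula xnf(φ) produced by the inductive XNF conversion is in neXt Normal Form: no Until or Release formula occurs among the propositional atoms of xnf(φ). -/
/-- LTL formulas in negation normal form over atomic propositions `AP`. -/
inductive LTL (AP : Type) : Type
  | tt : LTL AP
  | ff : LTL AP
  | pos : AP → LTL AP
  | neg : AP → LTL AP
  | conj : LTL AP → LTL AP → LTL AP
  | disj : LTL AP → LTL AP → LTL AP
  | untl : LTL AP → LTL AP → LTL AP
  | rels : LTL AP → LTL AP → LTL AP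
  | next : LTL AP → LTL AP
  deriving DecidableEq

/-- The suffix of a trace starting at position `k`. -/
def shift {AP : Type} (ξ : ℕ → Set AP) (k : ℕ) : ℕ → Set AP := fun i => ξ (i + k)

/-- Standard LTL semantics over infinite traces (a trace gives, at each
position, the set of atomic propositions holding there; a negated literal
holds iff the atom does not hold). -/
def Sat {AP : Type} : (ℕ → Set AP) → LTL AP → Prop
  | _, .tt => True
  | _, .ff => False
  | ξ, .pos a => a ∈ ξ 0
  | ξ, .neg a => a ∉ ξ 0
  | ξ, .conj f g => Sat ξ f ∧ Sat ξ g
  | ξ, .disj f g => Sat ξ f ∨ Sat ξ g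
  | ξ, .next f => Sat (shift ξ 1) f
  | ξ, .untl f g => ∃ i, Sat (shift ξ i) g ∧ ∀ j < i, Sat (shift ξ j) f
  | ξ, .rels f g => ∀ i, Sat (shift ξ i) g ∨ ∃ j ≤ i, Sat (shift ξ j) f

/-- An LTL formula is satisfiable if some infinite trace satisfies it. -/
def Satisfiable {AP : Type} (φ : LTL AP) : Prop := ∃ ξ : ℕ → Set AP, Sat ξ φ

/-- The closure `cl φ`: contains `φ`, is closed under subformulas, and
contains `X ψ` for every Until or Release formula `ψ ∈ cl φ`. -/
def cl {AP : Type} : LTL AP → Set (LTL AP)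
  | .conj f g => insert (.conj f g) (cl f ∪ cl g)
  | .disj f g => insert (.disj f g) (cl f ∪ cl g)
  | .next f => insert (.next f) (cl f)
  | .untl f g => insert (.untl f g) (insert (.next (.untl f g)) (cl f ∪ cl g))
  | .rels f g => insert (.rels f g) (insert (.next (.rels f g)) (cl f ∪ cl g))
  | φ => {φ}

/-- A propositional assignment for `φ`: a subset of `cl φ` satisfying the
local consistency conditions for literals, ∧, ∨, Until and Release. -/
def IsAssignment {AP : Type} (φ : LTL AP) (A : Set (LTL AP)) : Prop :=
  A ⊆ cl φ ∧
  (∀ a : AP, (LTL.pos a ∈ cl φ ∨ LTL.neg a ∈ cl φ) →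
     ((LTL.pos a ∈ A ∨ LTL.neg a ∈ A) ∧ ¬(LTL.pos a ∈ A ∧ LTL.neg a ∈ A))) ∧
  (∀ f g, LTL.conj f g ∈ A → f ∈ A ∧ g ∈ A) ∧
  (∀ f g, LTL.disj f g ∈ A → f ∈ A ∨ g ∈ A) ∧
  (∀ f g, LTL.untl f g ∈ A → g ∈ A ∨ (f ∈ A ∧ LTL.next (LTL.untl f g) ∈ A)) ∧
  (∀ f g, LTL.rels f g ∈ A → g ∈ A ∧ (f ∈ A ∨ LTL.next (LTL.rels f g) ∈ A))

/-- Transition relation of the transition system `T_φ`. -/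
def LTLTrans {AP : Type} (φ : LTL AP) (s₁ s₂ : Set (LTL AP)) : Prop :=
  ∀ θ, LTL.next θ ∈ cl φ → LTL.next θ ∈ s₁ → θ ∈ s₂

/-- An infinite run of `T_φ`. -/
def IsRun {AP : Type} (φ : LTL AP) (r : ℕ → Set (LTL AP)) : Prop :=
  (∀ i, IsAssignment φ (r i)) ∧ φ ∈ r 0 ∧ ∀ i, LTLTrans φ (r i) (r (i + 1))

/-- A finite run `s 0, …, s n` of `T_φ`. -/
def IsFiniteRun {AP : Type} (φ : LTL AP) (s : ℕ → Set (LTL AP)) (n : ℕ) : Prop :=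
  (∀ i ≤ n, IsAssignment φ (s i)) ∧ φ ∈ s 0 ∧ ∀ i < n, LTLTrans φ (s i) (s (i + 1))

/-- The trace induced by a run: at each step, the atoms whose positive
literal belongs to the state. -/
def runTrace {AP : Type} (r : ℕ → Set (LTL AP)) : ℕ → Set AP :=
  fun i => {a | LTL.pos a ∈ r i}

/-- The Until formula `f U g` is stuck in run `r`: from some position onward,
every state contains it but postpones it (does not contain `g`). -/
def Stuck {AP : Type} (r : ℕ → Set (LTL AP)) (f g : LTL AP) : Prop :=
  ∃ i, ∀ j, i ≤ j → LTL.untl f g ∈ r j ∧ g ∉ r j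

/-- The neXt Normal Form conversion. -/
def xnf {AP : Type} : LTL AP → LTL AP
  | .conj f g => .conj (xnf f) (xnf g)
  | .disj f g => .disj (xnf f) (xnf g)
  | .untl f g => .disj (xnf g) (.conj (xnf f) (.next (.untl f g)))
  | .rels f g => .conj (xnf g) (.disj (xnf f) (.next (.rels f g)))
  | φ => φ

/-- The propositional atoms `U(φ)` of an LTL formula: literals, `tt`, `ff`
and temporal (Next/Until/Release) formulas are treated as atoms. -/
def patoms {AP : Type} : LTL AP → Set (LTL AP)
  | .conj f g => patoms f ∪ patoms g
  | .disj f g => patoms f ∪ patoms g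
  | φ => {φ}

/-- A formula is in neXt Normal Form if no Until or Release formula occurs
among its propositional atoms. -/
def InXNF {AP : Type} (φ : LTL AP) : Prop :=
  ∀ ψ ∈ patoms φ, ∀ f g : LTL AP, ψ ≠ LTL.untl f g ∧ ψ ≠ LTL.rels f g

/-- Propositional satisfaction of `φ^p`: `φ` viewed as a propositional
formula over its propositional atoms, evaluated against the set `B` of atoms
assigned true. -/
def PSat {AP : Type} (B : Set (LTL AP)) : LTL AP → Prop
  | .tt => True
  | .ff => False
  | .conj f g => PSat B f ∧ PSat B g
  | .disj f g => PSat B f ∨ PSat B g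
  | φ => φ ∈ B

/-- Size of a formula (number of connectives/atoms). -/
def size {AP : Type} : LTL AP → ℕ
  | .conj f g => size f + size g + 1
  | .disj f g => size f + size g + 1
  | .untl f g => size f + size g + 1
  | .rels f g => size f + size g + 1
  | .next f => size f + 1
  | _ => 1

/-! The atoms of a conjunction or disjunction are those of its parts, and the only Until and
Release formulas that `xnf` introduces occur under `X`, where they are hidden inside the atom
`X ψ`. -/

theorem inXNF_iff_of_patoms_eq_union {AP : Type} {φ f g : LTL AP}
    (h : patoms φ = patoms f ∪ patoms g) : InXNF φ ↔ InXNF f ∧ InXNF g := by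
  simp only [InXNF, h, Set.mem_union, or_imp]
  exact ⟨fun hφ => ⟨fun ψ => (hφ ψ).1, fun ψ => (hφ ψ).2⟩,
    fun ⟨hf, hg⟩ ψ => ⟨hf ψ, hg ψ⟩⟩

theorem inXNF_conj_iff {AP : Type} {f g : LTL AP} :
    InXNF (.conj f g) ↔ InXNF f ∧ InXNF g :=
  inXNF_iff_of_patoms_eq_union rfl

theorem inXNF_disj_iff {AP : Type} {f g : LTL AP} :
    InXNF (.disj f g) ↔ InXNF f ∧ InXNF g :=
  inXNF_iff_of_patoms_eq_union rfl

theorem inXNF_next {AP : Type} (f : LTL AP) : InXNF (.next f) := by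
  simp [InXNF, patoms]

/-- `xnf φ` is in neXt Normal Form: no Until or Release formula occurs among
its propositional atoms. -/
theorem xnf_inXNF {AP : Type} (φ : LTL AP) : InXNF (xnf φ) := by
  induction φ with
  | conj f g ihf ihg => exact inXNF_conj_iff.2 ⟨ihf, ihg⟩
  | disj f g ihf ihg => exact inXNF_disj_iff.2 ⟨ihf, ihg⟩
  | untl f g ihf ihg => exact inXNF_disj_iff.2 ⟨ihg, inXNF_conj_iff.2 ⟨ihf, inXNF_next _⟩⟩
  | rels f g ihf ihg => exact inXNF_conj_iff.2 ⟨ihg, inXNF_disj_iff.2 ⟨ihf, inXNF_next _⟩⟩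
  | next f => exact inXNF_next f
  | tt | ff | pos _ | neg _ => simp [xnf, InXNF, patoms]
end

section
/- For an LTL formula φ and Until subformula ψ with avoidable sequence ρ = Q_0, Q_1, ..., Q_k being unavoidable (i.e., θ_{k-1} ⟹ θ_k where θ_i = ⋀_{0≤j≤i} ⋁_{S∈Q_j} ⋀S), it holds that xnf(θ_k) ∧ ¬X(θ_k) is unsatisfiable; that is, every state implying θ_k has all its successor states implying θ_k (θ_k is an invariant of the transition system). -/
/-- `ξ` satisfies the conjunction `⋀ S` of a set of formulas. -/
def SatSet {AP : Type} (ξ : ℕ → Set AP) (S : Set (LTL AP)) : Prop :=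
  ∀ f ∈ S, Sat ξ f

/-- `ξ` satisfies the disjunction `⋁_{S ∈ Q} ⋀ S`. -/
def SatDisj {AP : Type} (ξ : ℕ → Set AP) (Q : Set (Set (LTL AP))) : Prop :=
  ∃ S ∈ Q, SatSet ξ S

/-- `ξ` satisfies `θ_i = ⋀_{0 ≤ j ≤ i} ⋁_{S ∈ Q_j} ⋀ S`. -/
def SatTheta {AP : Type} (ξ : ℕ → Set AP) (ρ : ℕ → Set (Set (LTL AP))) (i : ℕ) : Prop :=
  ∀ j ≤ i, SatDisj ξ (ρ j)

/-- `ρ 0, …, ρ k` is an avoidable sequence for the Until subformula `ψ` of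
`φ`: `Q_0 = {{ψ}}`, and `Q_{i+1}` consists exactly of the minimal subsets
`S' ⊆ cl φ` such that `θ_i ∧ ¬X θ_i` is satisfiable but
`(⋀ S') ∧ θ_i ∧ ¬X θ_i` is not. -/
def IsAvoidableSeq {AP : Type} (φ ψ : LTL AP) (ρ : ℕ → Set (Set (LTL AP)))
    (k : ℕ) : Prop :=
  ρ 0 = {{ψ}} ∧
  (∀ j ≤ k, ∀ S ∈ ρ j, S ⊆ cl φ) ∧
  ∀ i, i + 1 ≤ k → ∀ S' : Set (LTL AP), S' ⊆ cl φ →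
    (S' ∈ ρ (i + 1) ↔
      ((∃ ξ : ℕ → Set AP, SatTheta ξ ρ i ∧ ¬ SatTheta (shift ξ 1) ρ i) ∧
       ¬ (∃ ξ : ℕ → Set AP, SatSet ξ S' ∧ SatTheta ξ ρ i ∧ ¬ SatTheta (shift ξ 1) ρ i) ∧
       (∀ S'' ⊂ S', ∃ ξ : ℕ → Set AP,
          SatSet ξ S'' ∧ SatTheta ξ ρ i ∧ ¬ SatTheta (shift ξ 1) ρ i)))

theorem SatTheta.mono {AP : Type} {ξ : ℕ → Set AP} {ρ : ℕ → Set (Set (LTL AP))} {i j : ℕ}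
    (hij : i ≤ j) (h : SatTheta ξ ρ j) : SatTheta ξ ρ i :=
  fun l hl => h l (hl.trans hij)

theorem IsAvoidableSeq.satTheta_shift_of_mem {AP : Type} {φ ψ : LTL AP}
    {ρ : ℕ → Set (Set (LTL AP))} {k i : ℕ} (havoid : IsAvoidableSeq φ ψ ρ k) (hi : i + 1 ≤ k)
    {S : Set (LTL AP)} (hS : S ∈ ρ (i + 1)) (ξ : ℕ → Set AP) (hSξ : SatSet ξ S)
    (hθ : SatTheta ξ ρ i) : SatTheta (shift ξ 1) ρ i := by
  obtain ⟨-, hcl, hcore⟩ := havoid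
  have hunsat := ((hcore i hi S (hcl _ hi S hS)).mp hS).2.1
  by_contra hnext
  exact hunsat ⟨ξ, hSξ, hθ, hnext⟩

/-- If the avoidable sequence `ρ 0, …, ρ k` for the Until subformula `ψ` of
`φ` is unavoidable (`θ_{k-1} ⟹ θ_k`), then `θ_k ∧ ¬X(θ_k)` is
unsatisfiable: every trace satisfying `θ_k` has its one-step suffix
satisfying `θ_k` (so `θ_k` is an invariant of the transition system). -/
theorem unavoidable_invariant {AP : Type} (φ ψ : LTL AP)
    (ρ : ℕ → Set (Set (LTL AP))) (k : ℕ) (hk : 1 ≤ k)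
    (havoid : IsAvoidableSeq φ ψ ρ k)
    (hunav : ∀ ξ : ℕ → Set AP, SatTheta ξ ρ (k - 1) → SatTheta ξ ρ k) :
    ∀ ξ : ℕ → Set AP, SatTheta ξ ρ k → SatTheta (shift ξ 1) ρ k := by
  obtain ⟨n, rfl⟩ : ∃ n, k = n + 1 := ⟨k - 1, by omega⟩
  intro ξ hξ
  obtain ⟨S, hS, hSξ⟩ := hξ (n + 1) le_rfl
  exact hunav _ (havoid.satTheta_shift_of_mem le_rfl hS ξ hSξ (hξ.mono n.le_succ))
end
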